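/- Let g₁₁, g₁₂, g₂₂ : ℝ³ → ℝ be smooth with g₁₁ g₂₂ − g₁₂² > 0 and g₁₁, g₂₂ > 0 everywhere, let u : D → ℝ be Lipschitz on an open D ⊆ ℝ², and define A(u) = ∫_D (g₂₂(f_u)(u_x + u u_t)² + 2g₁₂(f_u)(u_x + u u_t) + g₁₁(f_u))^{1/2} dx dt where f_u(x,t) = (x, u(x,t), t). Then for every v ∈ C¹_c(D), the function s ↦ A(u + s v) is differentiable at s = 0 with derivative ∫_D (K₁ v + M (v_x + u v_t + v u_t)) dx dt, where K₁ = (∂_y g₂₂ · (u_x+u u_t)² + 2 ∂_y g₁₂ · (u_x+u u_t) + ∂_y g₁₁) / (2 (g₂₂(u_x+u u_t)² + 2g₁₂(u_x+u u_t) + g₁₁)^{1/2}) and M = (g₂₂ (u_x+u u_t) + g₁₂) / (g₂₂(u_x+u u_t)² + 2g₁₂(u_x+u u_t) + g₁₁)^{1/2}, all metric coefficients evaluated at f_u. -/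

import Mathlib

open MeasureTheory

/-- Parametrization of the intrinsic graph of `w`: `f_w(x,t) = (x, w(x,t), t)`. -/
def graphMap (w : ℝ × ℝ → ℝ) (p : ℝ × ℝ) : ℝ × ℝ × ℝ := (p.1, w p, p.2)

/-- The gslope `w_x + w w_t` of the intrinsic graph of `w`. -/
noncomputable def gslope (w : ℝ × ℝ → ℝ) (p : ℝ × ℝ) : ℝ :=
  fderiv ℝ w p (1, 0) + w p * fderiv ℝ w p (0, 1)

/-- The quadratic expression `g₂₂(f_w)(w_x + w w_t)² + 2g₁₂(f_w)(w_x + w w_t) + g₁₁(f_w)`. -/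
noncomputable def Qform (g11 g12 g22 : ℝ × ℝ × ℝ → ℝ) (w : ℝ × ℝ → ℝ) (p : ℝ × ℝ) : ℝ :=
  g22 (graphMap w p) * (gslope w p) ^ 2 + 2 * g12 (graphMap w p) * gslope w p
    + g11 (graphMap w p)

/-- The sub-Riemannian area of the intrinsic graph of `w` over `D`. -/
noncomputable def Area (g11 g12 g22 : ℝ × ℝ × ℝ → ℝ) (D : Set (ℝ × ℝ))
    (w : ℝ × ℝ → ℝ) : ℝ :=
  ∫ p in D, Real.sqrt (Qform g11 g12 g22 w p)

/-- positivity of the quadratic form -/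
lemma quad_pos {a b c α : ℝ} (ha : 0 < a) (hc : 0 < c) (hd : 0 < a * c - b ^ 2) :
    0 < c * α ^ 2 + 2 * b * α + a := by
  nlinarith [sq_nonneg (c * α + b), sq_nonneg α, mul_pos hc hc]

noncomputable def Qg (g11 g12 g22 : ℝ × ℝ × ℝ → ℝ) (q : ℝ × ℝ × ℝ) (α : ℝ) : ℝ :=
  g22 q * α ^ 2 + 2 * g12 q * α + g11 q

def gam (u v : ℝ × ℝ → ℝ) (s : ℝ) (p : ℝ × ℝ) : ℝ × ℝ × ℝ := (p.1, u p + s * v p, p.2)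

noncomputable def al (u v : ℝ × ℝ → ℝ) (s : ℝ) (p : ℝ × ℝ) : ℝ :=
  (fderiv ℝ u p (1, 0) + s * fderiv ℝ v p (1, 0))
    + (u p + s * v p) * (fderiv ℝ u p (0, 1) + s * fderiv ℝ v p (0, 1))

noncomputable def alp (u v : ℝ × ℝ → ℝ) (s : ℝ) (p : ℝ × ℝ) : ℝ :=
  fderiv ℝ v p (1, 0) + v p * (fderiv ℝ u p (0, 1) + s * fderiv ℝ v p (0, 1))
    + (u p + s * v p) * fderiv ℝ v p (0, 1)

noncomputable def dA (g11 g12 g22 : ℝ × ℝ × ℝ → ℝ) (u v : ℝ × ℝ → ℝ) (s : ℝ) (p : ℝ × ℝ) : ℝ :=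
  (v p * (fderiv ℝ g22 (gam u v s p) (0, 1, 0) * (al u v s p) ^ 2
      + 2 * fderiv ℝ g12 (gam u v s p) (0, 1, 0) * al u v s p
      + fderiv ℝ g11 (gam u v s p) (0, 1, 0))
    + (2 * g22 (gam u v s p) * al u v s p + 2 * g12 (gam u v s p)) * alp u v s p)
  / (2 * Real.sqrt (Qg g11 g12 g22 (gam u v s p) (al u v s p)))

lemma key_deriv (g11 g12 g22 : ℝ × ℝ × ℝ → ℝ)
    (hg11 : ContDiff ℝ (⊤ : ℕ∞) g11) (hg12 : ContDiff ℝ (⊤ : ℕ∞) g12) (hg22 : ContDiff ℝ (⊤ : ℕ∞) g22)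
    (hpos : ∀ q : ℝ × ℝ × ℝ, 0 < g11 q ∧ 0 < g22 q ∧ 0 < g11 q * g22 q - (g12 q) ^ 2)
    (u v : ℝ × ℝ → ℝ) (hvd : Differentiable ℝ v) (p : ℝ × ℝ)
    (hup : DifferentiableAt ℝ u p) (s : ℝ) :
    HasDerivAt (fun t : ℝ => Real.sqrt (Qform g11 g12 g22 (fun q => u q + t * v q) p))
      (dA g11 g12 g22 u v s p) s := by
  have hq : ∀ (q : ℝ × ℝ × ℝ) (α : ℝ), 0 < Qg g11 g12 g22 q α := fun q α =>
    quad_pos (hpos q).1 (hpos q).2.1 (hpos q).2.2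
  -- fderiv of u + t v
  have hWf : ∀ (t : ℝ) (e : ℝ × ℝ),
      fderiv ℝ (fun q => u q + t * v q) p e = fderiv ℝ u p e + t * fderiv ℝ v p e := by
    intro t e
    have h1 : HasFDerivAt (fun q => u q + t * v q) (fderiv ℝ u p + t • fderiv ℝ v p) p := by
      exact hup.hasFDerivAt.add (((hvd p).hasFDerivAt).const_mul t)
    rw [h1.fderiv]
    simp [smul_eq_mul]
  have hfun : ∀ t : ℝ, Qform g11 g12 g22 (fun q => u q + t * v q) p
      = Qg g11 g12 g22 (gam u v t p) (al u v t p) := by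
    intro t
    simp only [Qform, gslope, graphMap, Qg, gam, al, hWf]
  simp only [hfun]
  -- building blocks
  have hy : HasDerivAt (fun t : ℝ => u p + t * v p) (v p) s :=
    (hasDerivAt_mul_const (v p)).const_add (u p)
  have hγ : HasDerivAt (fun t : ℝ => gam u v t p) ((0 : ℝ), v p, (0 : ℝ)) s := by
    simp only [gam]
    exact (hasDerivAt_const s p.1).prodMk (hy.prodMk (hasDerivAt_const s p.2))
  have hgc : ∀ g : ℝ × ℝ × ℝ → ℝ, ContDiff ℝ (⊤ : ℕ∞) g →
      HasDerivAt (fun t : ℝ => g (gam u v t p))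
        (v p * fderiv ℝ g (gam u v s p) (0, 1, 0)) s := by
    intro g hg
    have h0 := ((hg.differentiable (by simp)) (gam u v s p)).hasFDerivAt.comp_hasDerivAt s hγ
    have he : ((0 : ℝ), v p, (0 : ℝ)) = v p • ((0 : ℝ), (1 : ℝ), (0 : ℝ)) := by
      simp [Prod.ext_iff]
    rw [he, ContinuousLinearMap.map_smul, smul_eq_mul] at h0
    exact h0
  have h1 : HasDerivAt (fun t : ℝ => fderiv ℝ u p (1, 0) + t * fderiv ℝ v p (1, 0))
      (fderiv ℝ v p (1, 0)) s := (hasDerivAt_mul_const _).const_add _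
  have h2 : HasDerivAt (fun t : ℝ => fderiv ℝ u p (0, 1) + t * fderiv ℝ v p (0, 1))
      (fderiv ℝ v p (0, 1)) s := (hasDerivAt_mul_const _).const_add _
  have hα : HasDerivAt (fun t : ℝ => al u v t p) (alp u v s p) s := by
    simp only [al]
    have := h1.add (hy.mul h2)
    refine this.congr_deriv ?_
    simp only [alp]
    ring
  have hQd := (((hgc g22 hg22).mul (hα.pow 2)).add
      (((hgc g12 hg12).const_mul 2).mul hα)).add (hgc g11 hg11)
  have hQd' : HasDerivAt (fun t : ℝ => Qg g11 g12 g22 (gam u v t p) (al u v t p))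
      (v p * fderiv ℝ g22 (gam u v s p) (0, 1, 0) * al u v s p ^ 2
        + g22 (gam u v s p) * (2 * al u v s p ^ 1 * alp u v s p)
        + (2 * (v p * fderiv ℝ g12 (gam u v s p) (0, 1, 0)) * al u v s p
            + 2 * g12 (gam u v s p) * alp u v s p)
        + v p * fderiv ℝ g11 (gam u v s p) (0, 1, 0)) s := by
    refine hQd.congr_deriv ?_
    norm_num
  have hQpos := hq (gam u v s p) (al u v s p)
  have hsqrt := hQd'.sqrt hQpos.ne'
  convert hsqrt using 1
  have hs0 : Real.sqrt (Qg g11 g12 g22 (gam u v s p) (al u v s p)) ≠ 0 :=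
    (Real.sqrt_pos.mpr hQpos).ne'
  simp only [dA]
  field_simp
  ring

lemma abs_mul_le {a b A B : ℝ} (ha : |a| ≤ A) (hb : |b| ≤ B) : |a * b| ≤ A * B := by
  rw [abs_mul]
  exact mul_le_mul ha hb (abs_nonneg _) ((abs_nonneg a).trans ha)

lemma abs_add3 (a b c : ℝ) : |a + b + c| ≤ |a| + |b| + |c| :=
  (abs_add_le _ _).trans (by gcongr; exact abs_add_le _ _)

lemma dA_zero (g11 g12 g22 : ℝ × ℝ × ℝ → ℝ)
    (hpos : ∀ q : ℝ × ℝ × ℝ, 0 < g11 q ∧ 0 < g22 q ∧ 0 < g11 q * g22 q - (g12 q) ^ 2)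
    (u v : ℝ × ℝ → ℝ) (p : ℝ × ℝ) :
    dA g11 g12 g22 u v 0 p
      = (fderiv ℝ g22 (graphMap u p) ((0 : ℝ), (1 : ℝ), (0 : ℝ)) * (gslope u p) ^ 2
            + 2 * fderiv ℝ g12 (graphMap u p) ((0 : ℝ), (1 : ℝ), (0 : ℝ)) * gslope u p
            + fderiv ℝ g11 (graphMap u p) ((0 : ℝ), (1 : ℝ), (0 : ℝ)))
              / (2 * Real.sqrt (Qform g11 g12 g22 u p)) * v p
          + (g22 (graphMap u p) * gslope u p + g12 (graphMap u p))
              / Real.sqrt (Qform g11 g12 g22 u p)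
            * (fderiv ℝ v p (1, 0) + u p * fderiv ℝ v p (0, 1)
                + v p * fderiv ℝ u p (0, 1)) := by
  have h0 : 0 < Qform g11 g12 g22 u p := by
    have := quad_pos (α := gslope u p) (hpos (graphMap u p)).1 (hpos (graphMap u p)).2.1
      (hpos (graphMap u p)).2.2
    simpa [Qform] using this
  have hs : Real.sqrt (Qform g11 g12 g22 u p) ≠ 0 := (Real.sqrt_pos.mpr h0).ne'
  simp only [dA, gam, al, alp, Qg, Qform, gslope, graphMap, zero_mul, add_zero, mul_zero] at *
  field_simp
  ring

/-- Proposition 4.1, first variation of the intrinsic-graph area: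
for `u` Lipschitz on `D`, smooth positive-definite metric coefficients `g_ij`
and `v ∈ C¹_c(D)`, `s ↦ A(u + sv)` is differentiable at `0` with derivative
`∫_D (K₁ v + M (v_x + u v_t + v u_t))`. -/
theorem first_variation_of_intrinsic_graph_area
    (g11 g12 g22 : ℝ × ℝ × ℝ → ℝ)
    (hg11 : ContDiff ℝ (⊤ : ℕ∞) g11) (hg12 : ContDiff ℝ (⊤ : ℕ∞) g12) (hg22 : ContDiff ℝ (⊤ : ℕ∞) g22)
    (hpos : ∀ q : ℝ × ℝ × ℝ,
      0 < g11 q ∧ 0 < g22 q ∧ 0 < g11 q * g22 q - (g12 q) ^ 2)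
    (D : Set (ℝ × ℝ)) (hD : IsOpen D)
    (u : ℝ × ℝ → ℝ) (c : NNReal) (hu : LipschitzOnWith c u D)
    (hint : IntegrableOn (fun p => Real.sqrt (Qform g11 g12 g22 u p)) D)
    (v : ℝ × ℝ → ℝ) (hv : ContDiff ℝ 1 v) (hvc : HasCompactSupport v)
    (hvs : tsupport v ⊆ D) :
    HasDerivAt (fun s : ℝ => Area g11 g12 g22 D (fun p => u p + s * v p))
      (∫ p in D,
        ((fderiv ℝ g22 (graphMap u p) ((0 : ℝ), (1 : ℝ), (0 : ℝ)) * (gslope u p) ^ 2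
            + 2 * fderiv ℝ g12 (graphMap u p) ((0 : ℝ), (1 : ℝ), (0 : ℝ)) * gslope u p
            + fderiv ℝ g11 (graphMap u p) ((0 : ℝ), (1 : ℝ), (0 : ℝ)))
              / (2 * Real.sqrt (Qform g11 g12 g22 u p)) * v p
          + (g22 (graphMap u p) * gslope u p + g12 (graphMap u p))
              / Real.sqrt (Qform g11 g12 g22 u p)
            * (fderiv ℝ v p (1, 0) + u p * fderiv ℝ v p (0, 1)
                + v p * fderiv ℝ u p (0, 1))))
      0 := by
  classical
  have hDm : MeasurableSet D := hD.measurableSet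
  set μ : Measure (ℝ × ℝ) := MeasureTheory.volume.restrict D with hμdef
  have hvcont : Continuous v := hv.continuous
  have hvd : Differentiable ℝ v := hv.differentiable one_ne_zero
  have hKc : IsCompact (tsupport v) := hvc
  have hq : ∀ (q : ℝ × ℝ × ℝ) (α : ℝ), 0 < Qg g11 g12 g22 q α := fun q α =>
    quad_pos (hpos q).1 (hpos q).2.1 (hpos q).2.2
  have hum : AEStronglyMeasurable u μ := hu.continuousOn.aestronglyMeasurable hDm
  -- measurability of the integrand functions
  have hmeas : ∀ s : ℝ, AEStronglyMeasurable
      (fun p => Real.sqrt (Qform g11 g12 g22 (fun q => u q + s * v q) p)) μ := by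
    intro s
    have hw : AEStronglyMeasurable (fun q => u q + s * v q) μ :=
      hum.add (continuous_const.mul hvcont).aestronglyMeasurable
    have hgm : AEStronglyMeasurable (fun p => graphMap (fun q => u q + s * v q) p) μ :=
      continuous_fst.aestronglyMeasurable.prodMk
        (hw.prodMk continuous_snd.aestronglyMeasurable)
    have hsl : AEStronglyMeasurable (fun p => gslope (fun q => u q + s * v q) p) μ :=
      ((measurable_fderiv_apply_const ℝ _ _).aestronglyMeasurable).add
        (hw.mul (measurable_fderiv_apply_const ℝ _ _).aestronglyMeasurable)
    have hsl2 : AEStronglyMeasurable (fun p => gslope (fun q => u q + s * v q) p ^ 2) μ := by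
      exact hsl.pow 2
    simp only [Qform]
    exact Real.continuous_sqrt.comp_aestronglyMeasurable
      ((((hg22.continuous.comp_aestronglyMeasurable hgm).mul hsl2).add
        (((hg12.continuous.comp_aestronglyMeasurable hgm).const_mul 2).mul hsl)).add
        (hg11.continuous.comp_aestronglyMeasurable hgm))
  have hF'meas : AEStronglyMeasurable (fun p => dA g11 g12 g22 u v 0 p) μ := by
    have hwm : AEStronglyMeasurable (fun p => u p + (0:ℝ) * v p) μ :=
      hum.add (continuous_const.mul hvcont).aestronglyMeasurable
    have hgm : AEStronglyMeasurable (fun p : ℝ × ℝ => ((p.1 : ℝ), u p + (0:ℝ) * v p, p.2)) μ :=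
      continuous_fst.aestronglyMeasurable.prodMk
        (hwm.prodMk continuous_snd.aestronglyMeasurable)
    have hdu1 : AEStronglyMeasurable (fun p => fderiv ℝ u p ((1:ℝ), (0:ℝ))) μ :=
      (measurable_fderiv_apply_const ℝ u _).aestronglyMeasurable
    have hdu2 : AEStronglyMeasurable (fun p => fderiv ℝ u p ((0:ℝ), (1:ℝ))) μ :=
      (measurable_fderiv_apply_const ℝ u _).aestronglyMeasurable
    have hdv1 : Continuous (fun p => fderiv ℝ v p ((1:ℝ), (0:ℝ))) :=
      (hv.continuous_fderiv one_ne_zero).clm_apply continuous_const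
    have hdv2 : Continuous (fun p => fderiv ℝ v p ((0:ℝ), (1:ℝ))) :=
      (hv.continuous_fderiv one_ne_zero).clm_apply continuous_const
    have hαm : AEStronglyMeasurable (fun p => al u v 0 p) μ := by
      simp only [al]
      exact (hdu1.add (continuous_const.mul hdv1).aestronglyMeasurable).add
        (hwm.mul (hdu2.add (continuous_const.mul hdv2).aestronglyMeasurable))
    have hα2 : AEStronglyMeasurable (fun p => al u v 0 p ^ 2) μ := by
      exact hαm.pow 2
    have hα'm : AEStronglyMeasurable (fun p => alp u v 0 p) μ := by
      simp only [alp]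
      exact (hdv1.aestronglyMeasurable.add
        (hvcont.aestronglyMeasurable.mul
          (hdu2.add (continuous_const.mul hdv2).aestronglyMeasurable))).add
        (hwm.mul hdv2.aestronglyMeasurable)
    have hgcomp : ∀ g : ℝ × ℝ × ℝ → ℝ, ContDiff ℝ (⊤ : ℕ∞) g →
        AEStronglyMeasurable (fun p => g (gam u v 0 p)) μ := fun g hg =>
      hg.continuous.comp_aestronglyMeasurable hgm
    have hdgcomp : ∀ g : ℝ × ℝ × ℝ → ℝ, ContDiff ℝ (⊤ : ℕ∞) g →
        AEStronglyMeasurable (fun p => fderiv ℝ g (gam u v 0 p) ((0:ℝ), (1:ℝ), (0:ℝ))) μ :=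
      fun g hg =>
      ((hg.continuous_fderiv (by simp)).clm_apply continuous_const).comp_aestronglyMeasurable hgm
    have hnum : AEStronglyMeasurable (fun p =>
        v p * (fderiv ℝ g22 (gam u v 0 p) (0, 1, 0) * al u v 0 p ^ 2
          + 2 * fderiv ℝ g12 (gam u v 0 p) (0, 1, 0) * al u v 0 p
          + fderiv ℝ g11 (gam u v 0 p) (0, 1, 0))
        + (2 * g22 (gam u v 0 p) * al u v 0 p + 2 * g12 (gam u v 0 p)) * alp u v 0 p) μ :=
      (hvcont.aestronglyMeasurable.mul ((((hdgcomp g22 hg22).mul hα2).add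
        (((hdgcomp g12 hg12).const_mul 2).mul hαm)).add (hdgcomp g11 hg11))).add
        (((((hgcomp g22 hg22).const_mul 2).mul hαm).add
          ((hgcomp g12 hg12).const_mul 2)).mul hα'm)
    have hQm : AEStronglyMeasurable (fun p =>
        Qg g11 g12 g22 (gam u v 0 p) (al u v 0 p)) μ := by
      simp only [Qg]
      exact (((hgcomp g22 hg22).mul hα2).add
        (((hgcomp g12 hg12).const_mul 2).mul hαm)).add (hgcomp g11 hg11)
    have hden : AEStronglyMeasurable (fun p =>
        2 * Real.sqrt (Qg g11 g12 g22 (gam u v 0 p) (al u v 0 p))) μ :=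
      (Real.continuous_sqrt.comp_aestronglyMeasurable hQm).const_mul 2
    exact (hnum.aemeasurable.div hden.aemeasurable).aestronglyMeasurable
  have hFint : Integrable
      (fun p => Real.sqrt (Qform g11 g12 g22 (fun q => u q + (0 : ℝ) * v q) p)) μ := by
    have he : (fun q => u q + (0 : ℝ) * v q) = u := by funext q; ring
    rw [he]
    exact hint
  -- constants and bounds
  obtain ⟨Mu, hMu⟩ := hKc.exists_bound_of_continuousOn (hu.continuousOn.mono hvs)
  obtain ⟨Mv, hMv⟩ := hvc.exists_bound_of_continuous hvcont
  obtain ⟨Mdv, hMdv⟩ := (hvc.fderiv (𝕜 := ℝ)).exists_bound_of_continuous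
    (hv.continuous_fderiv one_ne_zero)
  have hduB : ∀ p ∈ D, ∀ e : ℝ × ℝ, |fderiv ℝ u p e| ≤ (c : ℝ) * ‖e‖ := by
    intro p hp e
    rw [← Real.norm_eq_abs]
    calc ‖fderiv ℝ u p e‖ ≤ ‖fderiv ℝ u p‖ * ‖e‖ := (fderiv ℝ u p).le_opNorm e
      _ ≤ (c : ℝ) * ‖e‖ := mul_le_mul_of_nonneg_right
          (norm_fderiv_le_of_lipschitzOn ℝ (hD.mem_nhds hp) hu) (norm_nonneg e)
  have hdvB : ∀ (p e : ℝ × ℝ), |fderiv ℝ v p e| ≤ Mdv * ‖e‖ := by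
    intro p e
    rw [← Real.norm_eq_abs]
    calc ‖fderiv ℝ v p e‖ ≤ ‖fderiv ℝ v p‖ * ‖e‖ := (fderiv ℝ v p).le_opNorm e
      _ ≤ Mdv * ‖e‖ := mul_le_mul_of_nonneg_right (hMdv p) (norm_nonneg e)
  have hn10 : ‖((1 : ℝ), (0 : ℝ))‖ = 1 := by simp [Prod.norm_def]
  have hn01 : ‖((0 : ℝ), (1 : ℝ))‖ = 1 := by simp [Prod.norm_def]
  set KG : Set (ℝ × ℝ × ℝ) := insert 0 ((fun q : (ℝ × ℝ) × ℝ => (q.1.1, q.2, q.1.2)) ''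
      ((tsupport v) ×ˢ Set.Icc (-(Mu + Mv)) (Mu + Mv))) with hKGdef
  have hKG : IsCompact KG := ((hKc.prod isCompact_Icc).image (by fun_prop)).insert 0
  have hmemKG : ∀ s : ℝ, |s| ≤ 1 → ∀ p ∈ tsupport v, gam u v s p ∈ KG := by
    intro s hs p hp
    refine Set.mem_insert_of_mem _ ⟨(p, u p + s * v p), ⟨hp, ?_⟩, rfl⟩
    refine Set.mem_Icc.mpr (abs_le.mp ?_)
    calc |u p + s * v p| ≤ |u p| + |s| * |v p| := by
          simpa [abs_mul] using abs_add_le (u p) (s * v p)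
      _ ≤ Mu + 1 * Mv := by
          gcongr
          · simpa [Real.norm_eq_abs] using hMu p hp
          · simpa [Real.norm_eq_abs] using hMv p
      _ = Mu + Mv := by ring
  obtain ⟨M1, hM1⟩ := hKG.exists_bound_of_continuousOn hg11.continuous.continuousOn
  obtain ⟨M2, hM2⟩ := hKG.exists_bound_of_continuousOn hg12.continuous.continuousOn
  obtain ⟨M3, hM3⟩ := hKG.exists_bound_of_continuousOn hg22.continuous.continuousOn
  obtain ⟨M4, hM4⟩ := hKG.exists_bound_of_continuousOn
    (((hg11.continuous_fderiv (by simp)).clm_apply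
      (continuous_const (y := ((0:ℝ), (1:ℝ), (0:ℝ))))).continuousOn)
  obtain ⟨M5, hM5⟩ := hKG.exists_bound_of_continuousOn
    (((hg12.continuous_fderiv (by simp)).clm_apply
      (continuous_const (y := ((0:ℝ), (1:ℝ), (0:ℝ))))).continuousOn)
  obtain ⟨M6, hM6⟩ := hKG.exists_bound_of_continuousOn
    (((hg22.continuous_fderiv (by simp)).clm_apply
      (continuous_const (y := ((0:ℝ), (1:ℝ), (0:ℝ))))).continuousOn)
  set MM : ℝ := max M1 (max M2 (max M3 (max M4 (max M5 M6)))) with hMMdef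
  have hb11 : ∀ q ∈ KG, |g11 q| ≤ MM := fun q hq' =>
    le_trans (by simpa [Real.norm_eq_abs] using hM1 q hq') (le_max_left _ _)
  have hb12 : ∀ q ∈ KG, |g12 q| ≤ MM := fun q hq' =>
    le_trans (by simpa [Real.norm_eq_abs] using hM2 q hq')
      (le_max_of_le_right (le_max_left _ _))
  have hb22 : ∀ q ∈ KG, |g22 q| ≤ MM := fun q hq' =>
    le_trans (by simpa [Real.norm_eq_abs] using hM3 q hq')
      (le_max_of_le_right (le_max_of_le_right (le_max_left _ _)))
  have hd11 : ∀ q ∈ KG, |fderiv ℝ g11 q ((0:ℝ), (1:ℝ), (0:ℝ))| ≤ MM := fun q hq' =>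
    le_trans (by simpa [Real.norm_eq_abs] using hM4 q hq')
      (le_max_of_le_right (le_max_of_le_right (le_max_of_le_right (le_max_left _ _))))
  have hd12 : ∀ q ∈ KG, |fderiv ℝ g12 q ((0:ℝ), (1:ℝ), (0:ℝ))| ≤ MM := fun q hq' =>
    le_trans (by simpa [Real.norm_eq_abs] using hM5 q hq')
      (le_max_of_le_right (le_max_of_le_right (le_max_of_le_right
        (le_max_of_le_right (le_max_left _ _)))))
  have hd22 : ∀ q ∈ KG, |fderiv ℝ g22 q ((0:ℝ), (1:ℝ), (0:ℝ))| ≤ MM := fun q hq' =>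
    le_trans (by simpa [Real.norm_eq_abs] using hM6 q hq')
      (le_max_of_le_right (le_max_of_le_right (le_max_of_le_right
        (le_max_of_le_right (le_max_right _ _)))))
  obtain ⟨q0, hq0KG, hq0min⟩ := hKG.exists_isMinOn ⟨0, Set.mem_insert _ _⟩
    ((((hg11.continuous.mul hg22.continuous).sub (hg12.continuous.pow 2)).div hg22.continuous
      (fun q => (hpos q).2.1.ne')).continuousOn)
  set m : ℝ := (g11 q0 * g22 q0 - g12 q0 ^ 2) / g22 q0 with hmdef
  have hm : 0 < m := div_pos (hpos q0).2.2 (hpos q0).2.1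
  have hQge : ∀ q ∈ KG, ∀ α : ℝ, m ≤ Qg g11 g12 g22 q α := by
    intro q hq' α
    have h1 : m ≤ (g11 q * g22 q - g12 q ^ 2) / g22 q := hq0min hq'
    refine h1.trans ?_
    rw [div_le_iff₀ (hpos q).2.1]
    simp only [Qg]
    nlinarith [sq_nonneg (g22 q * α + g12 q), (hpos q).2.1]
  set Ca : ℝ := ((c : ℝ) + Mdv) + (Mu + Mv) * ((c : ℝ) + Mdv) with hCadef
  set Ca' : ℝ := Mdv + Mv * ((c : ℝ) + Mdv) + (Mu + Mv) * Mdv with hCa'def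
  set CN : ℝ := Mv * (MM * Ca ^ 2 + 2 * MM * Ca + MM) + (2 * MM * Ca + 2 * MM) * Ca'
    with hCNdef
  set CB : ℝ := CN / (2 * Real.sqrt m) with hCBdef
  have hbound_int : Integrable ((tsupport v).indicator fun _ => CB) μ := by
    rw [integrable_indicator_iff hKc.measurableSet]
    refine (integrableOn_const_iff (C := CB)).mpr (Or.inr ?_)
    rw [hμdef, Measure.restrict_apply hKc.measurableSet]
    exact lt_of_le_of_lt (measure_mono Set.inter_subset_left) hKc.measure_lt_top
  have h_bound : ∀ᵐ p ∂μ, ∀ s ∈ Metric.ball (0 : ℝ) 1,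
      ‖dA g11 g12 g22 u v s p‖ ≤ (tsupport v).indicator (fun _ => CB) p := by
    rw [hμdef, ae_restrict_iff' hDm]
    refine Filter.Eventually.of_forall fun p hpD => ?_
    intro s hs
    rw [Real.norm_eq_abs]
    by_cases hp : p ∈ tsupport v
    · rw [Set.indicator_of_mem hp]
      have habs_s : |s| ≤ 1 := by
        have := Metric.mem_ball.mp hs
        rw [Real.dist_eq, sub_zero] at this
        exact this.le
      have hA : |fderiv ℝ u p (1, 0)| ≤ (c : ℝ) := by
        simpa [hn10] using hduB p (hvs hp) (1, 0)
      have hB : |fderiv ℝ u p (0, 1)| ≤ (c : ℝ) := by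
        simpa [hn01] using hduB p (hvs hp) (0, 1)
      have hC : |fderiv ℝ v p (1, 0)| ≤ Mdv := by simpa [hn10] using hdvB p (1, 0)
      have hE : |fderiv ℝ v p (0, 1)| ≤ Mdv := by simpa [hn01] using hdvB p (0, 1)
      have hup' : |u p| ≤ Mu := by simpa [Real.norm_eq_abs] using hMu p hp
      have hvp : |v p| ≤ Mv := by simpa [Real.norm_eq_abs] using hMv p
      have hsC : |s * fderiv ℝ v p (1, 0)| ≤ Mdv := by
        rw [abs_mul]
        calc |s| * |fderiv ℝ v p (1, 0)| ≤ 1 * Mdv :=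
              mul_le_mul habs_s hC (abs_nonneg _) zero_le_one
          _ = Mdv := one_mul _
      have hsE : |s * fderiv ℝ v p (0, 1)| ≤ Mdv := by
        rw [abs_mul]
        calc |s| * |fderiv ℝ v p (0, 1)| ≤ 1 * Mdv :=
              mul_le_mul habs_s hE (abs_nonneg _) zero_le_one
          _ = Mdv := one_mul _
      have hab : |u p + s * v p| ≤ Mu + Mv := by
        calc |u p + s * v p| ≤ |u p| + |s * v p| := abs_add_le _ _
          _ ≤ Mu + Mv := add_le_add hup' (by
              rw [abs_mul]
              calc |s| * |v p| ≤ 1 * Mv := mul_le_mul habs_s hvp (abs_nonneg _) zero_le_one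
                _ = Mv := one_mul _)
      have hAC : |fderiv ℝ u p (1, 0) + s * fderiv ℝ v p (1, 0)| ≤ (c : ℝ) + Mdv :=
        (abs_add_le _ _).trans (add_le_add hA hsC)
      have hBE : |fderiv ℝ u p (0, 1) + s * fderiv ℝ v p (0, 1)| ≤ (c : ℝ) + Mdv :=
        (abs_add_le _ _).trans (add_le_add hB hsE)
      have hal : |al u v s p| ≤ Ca := by
        rw [hCadef]
        simp only [al]
        exact (abs_add_le _ _).trans (add_le_add hAC (abs_mul_le hab hBE))
      have halp : |alp u v s p| ≤ Ca' := by
        rw [hCa'def]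
        simp only [alp]
        exact (abs_add3 _ _ _).trans
          (add_le_add (add_le_add hC (abs_mul_le hvp hBE)) (abs_mul_le hab hE))
      have hγKG := hmemKG s habs_s p hp
      have hX : |fderiv ℝ g22 (gam u v s p) (0, 1, 0) * al u v s p ^ 2
          + 2 * fderiv ℝ g12 (gam u v s p) (0, 1, 0) * al u v s p
          + fderiv ℝ g11 (gam u v s p) (0, 1, 0)| ≤ MM * Ca ^ 2 + 2 * MM * Ca + MM := by
        refine (abs_add3 _ _ _).trans (add_le_add (add_le_add ?_ ?_) (hd11 _ hγKG))
        · refine abs_mul_le (hd22 _ hγKG) ?_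
          rw [abs_pow]
          exact pow_le_pow_left₀ (abs_nonneg _) hal 2
        · have h2 : |2 * fderiv ℝ g12 (gam u v s p) (0, 1, 0)| ≤ 2 * MM := by
            rw [abs_mul, abs_two]
            exact mul_le_mul_of_nonneg_left (hd12 _ hγKG) (by norm_num)
          exact abs_mul_le h2 hal
      have hY : |2 * g22 (gam u v s p) * al u v s p + 2 * g12 (gam u v s p)|
          ≤ 2 * MM * Ca + 2 * MM := by
        refine (abs_add_le _ _).trans (add_le_add ?_ ?_)
        · refine abs_mul_le ?_ hal
          rw [abs_mul, abs_two]
          exact mul_le_mul_of_nonneg_left (hb22 _ hγKG) (by norm_num)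
        · rw [abs_mul, abs_two]
          exact mul_le_mul_of_nonneg_left (hb12 _ hγKG) (by norm_num)
      have hnum : |v p * (fderiv ℝ g22 (gam u v s p) (0, 1, 0) * al u v s p ^ 2
          + 2 * fderiv ℝ g12 (gam u v s p) (0, 1, 0) * al u v s p
          + fderiv ℝ g11 (gam u v s p) (0, 1, 0))
          + (2 * g22 (gam u v s p) * al u v s p + 2 * g12 (gam u v s p)) * alp u v s p|
          ≤ CN := by
        rw [hCNdef]
        exact (abs_add_le _ _).trans (add_le_add (abs_mul_le hvp hX) (abs_mul_le hY halp))
      have hQpos := hq (gam u v s p) (al u v s p)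
      have hden0 : 0 < 2 * Real.sqrt m := mul_pos two_pos (Real.sqrt_pos.mpr hm)
      have hdenQ : 0 < 2 * Real.sqrt (Qg g11 g12 g22 (gam u v s p) (al u v s p)) :=
        mul_pos two_pos (Real.sqrt_pos.mpr hQpos)
      have hden : 2 * Real.sqrt m
          ≤ 2 * Real.sqrt (Qg g11 g12 g22 (gam u v s p) (al u v s p)) :=
        mul_le_mul_of_nonneg_left (Real.sqrt_le_sqrt (hQge _ hγKG _)) (by norm_num)
      have hrw : |dA g11 g12 g22 u v s p|
          = |v p * (fderiv ℝ g22 (gam u v s p) (0, 1, 0) * al u v s p ^ 2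
              + 2 * fderiv ℝ g12 (gam u v s p) (0, 1, 0) * al u v s p
              + fderiv ℝ g11 (gam u v s p) (0, 1, 0))
            + (2 * g22 (gam u v s p) * al u v s p + 2 * g12 (gam u v s p)) * alp u v s p|
            / (2 * Real.sqrt (Qg g11 g12 g22 (gam u v s p) (al u v s p))) := by
        simp only [dA, abs_div]
        rw [abs_of_pos hdenQ]
      rw [hrw, hCBdef]
      exact div_le_div₀ ((abs_nonneg _).trans hnum) hnum hden0 hden
    · have hv0 : v p = 0 := image_eq_zero_of_notMem_tsupport hp
      have hdv0 : fderiv ℝ v p = 0 := by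
        by_contra h
        exact hp (support_fderiv_subset ℝ (Function.mem_support.mpr h))
      rw [Set.indicator_of_notMem hp]
      simp [dA, alp, hv0, hdv0]
  have hae : ∀ᵐ p ∂μ, DifferentiableAt ℝ u p := by
    rw [hμdef, ae_restrict_iff' hDm]
    filter_upwards [hu.ae_differentiableWithinAt_of_mem] with p hp hpD
    exact (hp hpD).differentiableAt (hD.mem_nhds hpD)
  have h_diff : ∀ᵐ p ∂μ, ∀ s ∈ Metric.ball (0 : ℝ) 1,
      HasDerivAt (fun t : ℝ => Real.sqrt (Qform g11 g12 g22 (fun q => u q + t * v q) p))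
        (dA g11 g12 g22 u v s p) s :=
    hae.mono fun p hp s _ => key_deriv g11 g12 g22 hg11 hg12 hg22 hpos u v hvd p hp s
  have main := (hasDerivAt_integral_of_dominated_loc_of_deriv_le
    (F := fun (s : ℝ) (p : ℝ × ℝ) =>
      Real.sqrt (Qform g11 g12 g22 (fun q => u q + s * v q) p))
    (F' := fun (s : ℝ) (p : ℝ × ℝ) => dA g11 g12 g22 u v s p)
    (x₀ := (0 : ℝ)) (μ := μ) (bound := (tsupport v).indicator fun _ => CB)
    (Metric.ball_mem_nhds 0 one_pos) (Filter.Eventually.of_forall hmeas) hFint hF'meas h_bound hbound_int h_diff).2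
  have hval : (∫ p in D,
      ((fderiv ℝ g22 (graphMap u p) ((0 : ℝ), (1 : ℝ), (0 : ℝ)) * (gslope u p) ^ 2
            + 2 * fderiv ℝ g12 (graphMap u p) ((0 : ℝ), (1 : ℝ), (0 : ℝ)) * gslope u p
            + fderiv ℝ g11 (graphMap u p) ((0 : ℝ), (1 : ℝ), (0 : ℝ)))
              / (2 * Real.sqrt (Qform g11 g12 g22 u p)) * v p
          + (g22 (graphMap u p) * gslope u p + g12 (graphMap u p))
              / Real.sqrt (Qform g11 g12 g22 u p)
            * (fderiv ℝ v p (1, 0) + u p * fderiv ℝ v p (0, 1)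
                + v p * fderiv ℝ u p (0, 1))))
      = ∫ p, dA g11 g12 g22 u v 0 p ∂μ :=
    integral_congr_ae (Filter.Eventually.of_forall fun p =>
      (dA_zero g11 g12 g22 hpos u v p).symm)
  rw [hval]
  exact main
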